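/- arXiv:2604.03001 — 4 statements merged into one kernel-verified Lean document; each statement's English description precedes it below -/
import Mathlib

section
/- Let X and Y be standard Borel spaces, and let P be a probability measure on X × Y with marginals P_X and P_Y. If there exists a σ-finite measure λ on Y such that P is absolutely continuous with respect to the product measure P_X ⊗ λ, then P is absolutely continuous with respect to P_X ⊗ P_Y. -/
open MeasureTheory

/-!
Take the Lebesgue decomposition of `λ` with respect to `P_Y` and a set `T` carrying `P_Y` on
which the singular part of `λ` vanishes. Then `P` lives on `X × T`, where `P_X ⊗ λ` agrees with `P_X ⊗ λ|_T`; and `λ|_T` is dominated by the absolutely continuous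
part of `λ`, hence by `P_Y`.
-/

namespace MeasureTheory.Measure

variable {X Y : Type*} [MeasurableSpace X] [MeasurableSpace Y]

lemma restrict_nullSet_singularPart_absolutelyContinuous (ν ρ : Measure Y)
    [ν.HaveLebesgueDecomposition ρ] :
    ν.restrict (mutuallySingular_singularPart ν ρ).nullSet ≪ ρ := by
  set T := (mutuallySingular_singularPart ν ρ).nullSet
  have hν : ν.restrict T = (ρ.withDensity (ν.rnDeriv ρ)).restrict T := by
    conv_lhs => rw [← singularPart_add_rnDeriv ν ρ]
    rw [restrict_add, (mutuallySingular_singularPart ν ρ).restrict_nullSet, zero_add]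
  rw [hν]
  exact restrict_le_self.absolutelyContinuous.trans (withDensity_absolutelyContinuous _ _)

theorem AbsolutelyContinuous.prod_of_snd {μ : Measure X} {ν ρ : Measure Y}
    {P : Measure (X × Y)} [SFinite μ] [SigmaFinite ν] [SigmaFinite ρ]
    (hP : P ≪ μ.prod ν) (hsnd : P.snd ≪ ρ) : P ≪ μ.prod ρ := by
  have hνρ := mutuallySingular_singularPart ν ρ
  set T := hνρ.nullSet
  have hPT : ∀ᵐ p ∂P, p ∈ Prod.snd ⁻¹' T := by
    change P (Prod.snd ⁻¹' Tᶜ) = 0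
    rw [← snd_apply hνρ.measurableSet_nullSet.compl]
    exact hsnd hνρ.measure_compl_nullSet
  have hrestrict : P ≪ μ.prod (ν.restrict T) := by
    rw [← restrict_eq_self_of_ae_mem hPT, ← Set.univ_prod, ← restrict_univ (μ := μ), prod_restrict]
    exact hP.restrict _
  exact hrestrict.trans
    (AbsolutelyContinuous.rfl.prod (restrict_nullSet_singularPart_absolutelyContinuous ν ρ))

end MeasureTheory.Measure

theorem stmt0_general {X Y : Type*} [MeasurableSpace X] [MeasurableSpace Y]
    (P : Measure (X × Y)) [IsProbabilityMeasure P]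
    (lam : Measure Y) [SigmaFinite lam]
    (h : P ≪ P.fst.prod lam) : P ≪ P.fst.prod P.snd :=
  h.prod_of_snd Measure.AbsolutelyContinuous.rfl

/-- If `P` on `X × Y` is absolutely continuous w.r.t. `P_X ⊗ λ` for some σ-finite `λ`,
then `P ≪ P_X ⊗ P_Y`. -/
theorem stmt0 {X Y : Type*} [MeasurableSpace X] [MeasurableSpace Y]
    [StandardBorelSpace X] [StandardBorelSpace Y]
    (P : Measure (X × Y)) [IsProbabilityMeasure P]
    (lam : Measure Y) [SigmaFinite lam]
    (h : P ≪ P.fst.prod lam) : P ≪ P.fst.prod P.snd :=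
  stmt0_general P lam h
end

section
/- Let X and Y be standard Borel spaces, P a probability measure on X × Y with marginals P_X, P_Y, and let y ↦ P_{X|Y}(·, y) be a regular conditional distribution of the first coordinate given the second. If the set of y for which P_{X|Y}(·, y) is mutually singular with P_X has positive P_Y-measure, then there is no σ-finite measure λ on Y with P ≪ P_X ⊗ λ. -/
/-!
The singular parts of the kernel `κ` relative to `P_X` can be chosen jointly measurably:
there is a measurable `T ⊆ X × Y` whose slices `T_y` are `P_X`-null for every `y` and carry
all of `κ y` whenever `κ y ⟂ₘ P_X`. By Tonelli `(P_X ⊗ λ) T = ∫ P_X(T_y) dλ = 0`, whereas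
the disintegration gives `P T = ∫ κ y (T_y) dP_Y ≥ P_Y {y | κ y ⟂ₘ P_X} > 0`.
-/

open MeasureTheory ProbabilityTheory Set

namespace ProbabilityTheory.Kernel

variable {α γ : Type*} {mα : MeasurableSpace α} {mγ : MeasurableSpace γ}
  [MeasurableSpace.CountableOrCountablyGenerated α γ]

lemma measure_compl_mutuallySingularSetSlice_eq_zero {κ η : Kernel α γ} [IsFiniteKernel κ]
    [IsFiniteKernel η] {a : α} (h : κ a ⟂ₘ η a) :
    κ a (mutuallySingularSetSlice κ η a)ᶜ = 0 := by
  rwa [← withDensity_rnDeriv_eq_zero_iff_measure_eq_zero,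
    withDensity_rnDeriv_eq_zero_iff_mutuallySingular]

lemma exists_measurableSet_null_slices_of_mutuallySingular (κ : Kernel α γ) [IsFiniteKernel κ]
    (μ : Measure γ) [IsFiniteMeasure μ] :
    ∃ T : Set (γ × α), MeasurableSet T ∧ (∀ a, μ ((fun x ↦ (x, a)) ⁻¹' T) = 0) ∧
      ∀ a, κ a ⟂ₘ μ → κ a ((fun x ↦ (x, a)) ⁻¹' T)ᶜ = 0 := by
  refine ⟨Prod.swap ⁻¹' mutuallySingularSet κ (const α μ),
    measurable_swap (measurableSet_mutuallySingularSet _ _), fun a ↦ ?_, fun a h ↦ ?_⟩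
  · exact (const_apply μ a) ▸ measure_mutuallySingularSetSlice κ (const α μ) a
  · exact measure_compl_mutuallySingularSetSlice_eq_zero (η := const α μ) (by rwa [const_apply])

end ProbabilityTheory.Kernel

lemma MeasureTheory.Measure.map_swap_eq_compProd_of_disintegration {α β : Type*}
    [MeasurableSpace α] [MeasurableSpace β] (P : Measure (α × β)) [IsFiniteMeasure P]
    (κ : Kernel β α) [IsSFiniteKernel κ]
    (hdis : ∀ A B, MeasurableSet A → MeasurableSet B →
      P (A ×ˢ B) = ∫⁻ y in B, κ y A ∂P.snd) :
    P.map Prod.swap = P.snd ⊗ₘ κ := by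
  refine Measure.ext_prod fun {B A} hB hA ↦ ?_
  rw [Measure.map_apply measurable_swap (hB.prod hA), preimage_swap_prod, hdis A B hA hB,
    Measure.compProd_apply_prod hB hA]

lemma MeasureTheory.Measure.apply_eq_lintegral_of_disintegration {α β : Type*}
    [MeasurableSpace α] [MeasurableSpace β] (P : Measure (α × β)) [IsFiniteMeasure P]
    (κ : Kernel β α) [IsSFiniteKernel κ]
    (hdis : ∀ A B, MeasurableSet A → MeasurableSet B →
      P (A ×ˢ B) = ∫⁻ y in B, κ y A ∂P.snd)
    {T : Set (α × β)} (hT : MeasurableSet T) :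
    P T = ∫⁻ y, κ y ((fun x ↦ (x, y)) ⁻¹' T) ∂P.snd := by
  calc P T = P.map Prod.swap (Prod.swap ⁻¹' T) := by
        rw [Measure.map_apply measurable_swap (measurable_swap hT)]; rfl
    _ = _ := by
        rw [Measure.map_swap_eq_compProd_of_disintegration P κ hdis,
          Measure.compProd_apply (measurable_swap hT)]
        rfl

theorem stmt4_general {X Y : Type*} [MeasurableSpace X] [MeasurableSpace Y]
    [StandardBorelSpace X]
    (P : Measure (X × Y)) [IsProbabilityMeasure P]
    (κ : Kernel Y X) [IsMarkovKernel κ]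
    (hdis : ∀ A B : Set _, MeasurableSet A → MeasurableSet B →
      P (A ×ˢ B) = ∫⁻ y in B, κ y A ∂P.snd)
    (hsing : 0 < P.snd {y | κ y ⟂ₘ P.fst}) :
    ¬ ∃ lam : Measure Y, SigmaFinite lam ∧ P ≪ P.fst.prod lam := by
  rintro ⟨lam, _, hac⟩
  obtain ⟨T, hT, hnull, hfull⟩ :=
    Kernel.exists_measurableSet_null_slices_of_mutuallySingular κ P.fst
  have hB : MeasurableSet {y | κ y ⟂ₘ P.fst} := by
    simpa only [Kernel.const_apply] using
      Kernel.measurableSet_mutuallySingular κ (Kernel.const Y P.fst)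
  set B := {y | κ y ⟂ₘ P.fst}
  have hprod : P.fst.prod lam T = 0 := by
    simp [Measure.prod_apply_symm hT, hnull]
  have hP : P.snd B ≤ P T := calc
    P.snd B = ∫⁻ y in B, κ y ((fun x ↦ (x, y)) ⁻¹' T) ∂P.snd := by
      rw [← setLIntegral_one]
      exact setLIntegral_congr_fun hB fun y hy ↦
        ((prob_compl_eq_zero_iff (measurable_prodMk_right hT)).mp (hfull y hy)).symm
    _ ≤ ∫⁻ y, κ y ((fun x ↦ (x, y)) ⁻¹' T) ∂P.snd := setLIntegral_le_lintegral _ _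
    _ = P T := (Measure.apply_eq_lintegral_of_disintegration P κ hdis hT).symm
  exact (hsing.trans_le hP).ne' (hac hprod)

/-- If the regular conditional distribution `κ y = P_{X|Y}(·, y)` is mutually singular
with the marginal `P_X` on a set of `y` of positive `P_Y`-measure, then no σ-finite
measure `λ` on `Y` satisfies `P ≪ P_X ⊗ λ`. -/
theorem stmt4 {X Y : Type*} [MeasurableSpace X] [MeasurableSpace Y]
    [StandardBorelSpace X] [StandardBorelSpace Y]
    (P : Measure (X × Y)) [IsProbabilityMeasure P]
    (κ : Kernel Y X) [IsMarkovKernel κ]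
    (hdis : ∀ A B : Set _, MeasurableSet A → MeasurableSet B →
      P (A ×ˢ B) = ∫⁻ y in B, κ y A ∂P.snd)
    (hsing : 0 < P.snd {y | κ y ⟂ₘ P.fst}) :
    ¬ ∃ lam : Measure Y, SigmaFinite lam ∧ P ≪ P.fst.prod lam :=
  stmt4_general P κ hdis hsing
end

section
/- Let X, Y be standard Borel spaces and P a probability measure on X × Y with marginals P_X, P_Y and disintegration y ↦ P_{X|Y}(·, y). If P ≪ P_X ⊗ P_Y, then for P_Y-almost every y, the conditional measure P_{X|Y}(·, y) is absolutely continuous with respect to P_X, with density given by the Radon–Nikodym derivative dP/d(P_X ⊗ P_Y)(·, y). -/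
/-!
With `f = dP/d(P_X ⊗ P_Y)`, the image of `P` under the swap `X × Y → Y × X` is
`P_Y ⊗ₘ η` for the kernel `η y = P_X.withDensity (f (·, y))`, and by the disintegration
hypothesis it is also `P_Y ⊗ₘ κ`. Since `X` is countably generated, a finite kernel is determined
`P_Y`-a.e. by its composition-product with `P_Y`, even against a merely s-finite kernel such as
`η`, so `κ y = η y` for `P_Y`-a.e. `y`.
-/

open MeasureTheory ProbabilityTheory Set
open scoped ENNReal NNReal

namespace ProbabilityTheory.Kernel

variable {α β : Type*} {mα : MeasurableSpace α} {mβ : MeasurableSpace β}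

instance isSFiniteKernel_withDensity (κ : Kernel α β) [IsSFiniteKernel κ] (f : α → β → ℝ≥0∞) :
    IsSFiniteKernel (κ.withDensity f) := by
  by_cases hf : Measurable (Function.uncurry f)
  swap; · rw [withDensity_of_not_measurable _ hf]; infer_instance
  -- `f` is its finite part plus countably many copies of the indicator of `{f = ∞}`.
  set g : α → β → ℝ≥0 := fun a b ↦ (f a b).toNNReal
  set h : α → β → ℝ≥0 := fun a b ↦ if f a b = ∞ then 1 else 0
  have hg : Measurable (Function.uncurry fun a b ↦ (g a b : ℝ≥0∞)) :=
    hf.ennreal_toNNReal.coe_nnreal_ennreal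
  have hh : Measurable (Function.uncurry fun a b ↦ (h a b : ℝ≥0∞)) :=
    (Measurable.ite (hf (measurableSet_singleton ∞)) measurable_const
      measurable_const).coe_nnreal_ennreal
  have hf_eq : κ.withDensity f =
      κ.withDensity (fun a b ↦ g a b) + Kernel.sum fun _ : ℕ ↦ κ.withDensity fun a b ↦ h a b := by
    ext a s hs
    simp only [FunLike.coe_add, Pi.add_apply, Measure.add_apply, sum_apply' _ _ hs,
      Kernel.withDensity_apply' _ hf, Kernel.withDensity_apply' _ hg,
      Kernel.withDensity_apply' _ hh]
    have hga : Measurable fun b ↦ (g a b : ℝ≥0∞) := hg.comp measurable_prodMk_left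
    have hha : Measurable fun b ↦ (h a b : ℝ≥0∞) := hh.comp measurable_prodMk_left
    rw [← lintegral_tsum fun _ ↦ hha.aemeasurable, ← lintegral_add_left hga]
    refine lintegral_congr fun b ↦ ?_
    by_cases hab : f a b = ∞ <;> simp [g, h, hab]
  rw [hf_eq]
  infer_instance

lemma ae_eq_of_compProd_eq_of_isSFiniteKernel [MeasurableSpace.CountableOrCountablyGenerated α β]
    {μ : Measure α} {κ η : Kernel α β} [IsFiniteMeasure μ] [IsFiniteKernel κ]
    [IsSFiniteKernel η] (h : μ ⊗ₘ κ = μ ⊗ₘ η) : κ =ᵐ[μ] η := by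
  have h_mass : ∀ᵐ a ∂μ, κ a univ = η a univ := by
    refine ae_eq_of_forall_setLIntegral_eq_of_sigmaFinite (κ.measurable_coe .univ)
      (η.measurable_coe .univ) fun s hs _ ↦ ?_
    rw [← Measure.compProd_apply_prod hs .univ, h, Measure.compProd_apply_prod hs .univ]
  have hs : MeasurableSet {a | κ a univ = η a univ} :=
    measurableSet_eq_fun (κ.measurable_coe .univ) (η.measurable_coe .univ)
  -- On the null set where the masses differ, `η` is replaced by `0`, which makes it finite.
  set η' := Kernel.piecewise hs η 0
  have : IsFiniteKernel η' := by
    refine ⟨⟨κ.bound, κ.bound_lt_top, fun a ↦ ?_⟩⟩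
    by_cases ha : κ a univ = η a univ
    · simpa [η', piecewise_apply, ha] using measure_le_bound κ a univ
    · simp [η', piecewise_apply, ha]
  have hη' : η' =ᵐ[μ] η := by
    filter_upwards [h_mass] with a ha
    simp [η', piecewise_apply, ha]
  filter_upwards [ae_eq_of_compProd_eq (h.trans (Measure.compProd_congr hη'.symm)), hη']
    with a h₁ h₂ using h₁.trans h₂

end ProbabilityTheory.Kernel

section

variable {X Y : Type*} [MeasurableSpace X] [MeasurableSpace Y]

lemma MeasureTheory.Measure.map_swap_eq_compProd {P : Measure (X × Y)} [IsFiniteMeasure P]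
    {ν : Measure Y} [SFinite ν] {κ : Kernel Y X} [IsSFiniteKernel κ]
    (h : ∀ (A : Set X) (B : Set Y), MeasurableSet A → MeasurableSet B →
      P (A ×ˢ B) = ∫⁻ y in B, κ y A ∂ν) :
    P.map Prod.swap = ν ⊗ₘ κ := by
  refine Measure.ext_prod fun {B A} hB hA ↦ ?_
  rw [Measure.map_apply measurable_swap (hB.prod hA), preimage_swap_prod, h A B hA hB,
    Measure.compProd_apply_prod hB hA]

lemma MeasureTheory.Measure.withDensity_prod_apply_prod (μ : Measure X) (ν : Measure Y)
    [SFinite μ] [SFinite ν] {f : X × Y → ℝ≥0∞} (hf : Measurable f) {A : Set X} {B : Set Y}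
    (hA : MeasurableSet A) (hB : MeasurableSet B) :
    (μ.prod ν).withDensity f (A ×ˢ B) =
      ∫⁻ y in B, Kernel.withDensity (Kernel.const Y μ) (fun y x ↦ f (x, y)) y A ∂ν := by
  rw [withDensity_apply _ (hA.prod hB), ← Measure.prod_restrict,
    lintegral_prod_symm _ hf.aemeasurable]
  refine setLIntegral_congr_fun hB fun y _ ↦ ?_
  rw [Kernel.withDensity_apply _ (by fun_prop), Kernel.const_apply, withDensity_apply _ hA]

end

theorem stmt5_general {X Y : Type*} [MeasurableSpace X] [MeasurableSpace Y]
    [StandardBorelSpace X]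
    (P : Measure (X × Y)) [IsProbabilityMeasure P]
    (κ : Kernel Y X) [IsMarkovKernel κ]
    (hdis : ∀ A B : Set _, MeasurableSet A → MeasurableSet B →
      P (A ×ˢ B) = ∫⁻ y in B, κ y A ∂P.snd)
    (hac : P ≪ P.fst.prod P.snd) :
    ∀ᵐ y ∂P.snd, κ y ≪ P.fst ∧
      κ y = P.fst.withDensity (fun x => P.rnDeriv (P.fst.prod P.snd) (x, y)) := by
  set f := P.rnDeriv (P.fst.prod P.snd)
  set η := Kernel.withDensity (Kernel.const Y P.fst) fun y x ↦ f (x, y)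
  have hκ : P.map Prod.swap = P.snd ⊗ₘ κ := Measure.map_swap_eq_compProd hdis
  have hη : P.map Prod.swap = P.snd ⊗ₘ η := by
    refine Measure.map_swap_eq_compProd (ν := P.snd) fun A B hA hB ↦ ?_
    conv_lhs => rw [← Measure.withDensity_rnDeriv_eq _ _ hac]
    exact Measure.withDensity_prod_apply_prod _ _ (Measure.measurable_rnDeriv _ _) hA hB
  filter_upwards [Kernel.ae_eq_of_compProd_eq_of_isSFiniteKernel (hκ.symm.trans hη)]
    with y hy
  have hκy : κ y = P.fst.withDensity fun x ↦ f (x, y) := by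
    rw [hy, Kernel.withDensity_apply _ (by fun_prop), Kernel.const_apply]
  exact ⟨hκy ▸ withDensity_absolutelyContinuous _ _, hκy⟩

/-- If `P ≪ P_X ⊗ P_Y`, then for `P_Y`-a.e. `y` the conditional measure `P_{X|Y}(·, y)`
is absolutely continuous with respect to `P_X`, with density
`x ↦ dP/d(P_X ⊗ P_Y)(x, y)`. -/
theorem stmt5 {X Y : Type*} [MeasurableSpace X] [MeasurableSpace Y]
    [StandardBorelSpace X] [StandardBorelSpace Y]
    (P : Measure (X × Y)) [IsProbabilityMeasure P]
    (κ : Kernel Y X) [IsMarkovKernel κ]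
    (hdis : ∀ A B : Set _, MeasurableSet A → MeasurableSet B →
      P (A ×ˢ B) = ∫⁻ y in B, κ y A ∂P.snd)
    (hac : P ≪ P.fst.prod P.snd) :
    ∀ᵐ y ∂P.snd, κ y ≪ P.fst ∧
      κ y = P.fst.withDensity (fun x => P.rnDeriv (P.fst.prod P.snd) (x, y)) :=
  stmt5_general P κ hdis hac
end

section
/- Let μ be a probability measure on a measurable space X and let H : X → (-∞, ∞] be measurable with 0 < Z := ∫ exp(-H) dμ < ∞. Define the Gibbs measure γ(A) := Z⁻¹ ∫_A exp(-H) dμ. Then for every probability measure ρ on X with ρ ≪ μ and ∫ H dρ well-defined, the free energy satisfies relEntropy(ρ ‖ μ) + ∫ H dρ ≥ -log Z, with equality if and only if ρ = γ. -/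
open MeasureTheory
open scoped Classical

/-- Relative entropy (KL divergence) of `ρ` with respect to `μ`, valued in `EReal`:
`∫ log(dρ/dμ) dρ` when `ρ ≪ μ` and the log-likelihood ratio is integrable, `+∞` otherwise. -/

noncomputable def relEntropy {X : Type*} [MeasurableSpace X] (ρ μ : Measure X) : EReal :=
  if ρ ≪ μ ∧ Integrable (llr ρ μ) ρ then ((∫ x, llr ρ μ x ∂ρ : ℝ) : EReal) else ⊤

/-!
Since `dρ/dμ = (dρ/dγ) · Z⁻¹ e^{-H}` ρ-almost everywhere, `log (dρ/dμ) = log (dρ/dγ) - H - log Z`,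
and integrating against `ρ` gives `relEntropy(ρ‖μ) + ∫ H dρ = KL(ρ‖γ) - log Z`, both sides being
`+∞` together. The theorem is then Gibbs' inequality `KL(ρ‖γ) ≥ 0` with its equality case
`KL(ρ‖γ) = 0 ↔ ρ = γ`.
-/

open Real InformationTheory
open scoped ENNReal

namespace MeasureTheory

variable {X : Type*} [MeasurableSpace X] {ρ μ : Measure X} {f : X → ℝ≥0∞}

lemma Measure.AbsolutelyContinuous.withDensity_of_ae_ne_zero (hρμ : ρ ≪ μ) (hf : AEMeasurable f μ)
    (hf_ne_zero : ∀ᵐ x ∂ρ, f x ≠ 0) : ρ ≪ μ.withDensity f := by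
  refine Measure.AbsolutelyContinuous.mk fun s _ hs ↦ ?_
  rw [withDensity_apply_eq_zero' hf, measure_eq_zero_iff_ae_notMem] at hs
  rw [measure_eq_zero_iff_ae_notMem]
  filter_upwards [hρμ.ae_le hs, hf_ne_zero] with x hxs hx0 hx using hxs ⟨hx0, hx⟩

-- Unlike `Measure.rnDeriv_withDensity_right`, this allows `f` to vanish on a `μ`-non-null set:
-- the chain rule `dρ/dμ = dρ/d(f • μ) · f` only needs `f ≠ 0` `ρ`-almost everywhere.
lemma llr_withDensity_right [SigmaFinite ρ] [SigmaFinite μ] (hf : Measurable f)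
    (hf_ne_top : ∀ᵐ x ∂μ, f x ≠ ∞) (hρ : ρ ≪ μ.withDensity f) :
    llr ρ (μ.withDensity f) =ᵐ[ρ] fun x ↦ llr ρ μ x - log (f x).toReal := by
  have := SigmaFinite.withDensity_of_ne_top hf_ne_top
  have hρμ : ρ ≪ μ := hρ.trans (withDensity_absolutelyContinuous μ f)
  filter_upwards [hρμ.ae_le (Measure.rnDeriv_mul_rnDeriv hρ (κ := μ)),
    hρμ.ae_le (Measure.rnDeriv_withDensity μ hf), hρμ.ae_le hf_ne_top,
    Measure.rnDeriv_pos hρ, hρ.ae_le (Measure.rnDeriv_lt_top ρ _), Measure.rnDeriv_pos hρμ]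
    with x hchain hdens hfx_top hpos hlt hpos_μ
  have hfx : f x ≠ 0 := by
    intro h
    simp [← hchain, hdens, h] at hpos_μ
  simp only [llr, ← hchain, Pi.mul_apply, hdens, ENNReal.toReal_mul]
  rw [log_mul (ENNReal.toReal_pos hpos.ne' hlt.ne).ne' (ENNReal.toReal_pos hfx hfx_top).ne']
  ring

end MeasureTheory

lemma relEntropy_eq_klDiv {X : Type*} [MeasurableSpace X] (ρ μ : Measure X)
    [IsProbabilityMeasure ρ] [IsProbabilityMeasure μ] : relEntropy ρ μ = klDiv ρ μ := by
  by_cases h : ρ ≪ μ ∧ Integrable (llr ρ μ) ρ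
  · rw [relEntropy, if_pos h, ← toReal_klDiv_of_measure_eq h.1 (by simp),
      EReal.coe_ennreal_toReal (klDiv_ne_top h.1 h.2)]
  · rw [relEntropy, if_neg h, (klDiv_eq_top_iff.mpr fun hρμ ↦ (h ⟨hρμ, ·⟩)), EReal.coe_ennreal_top]

lemma EReal.toReal_exp_neg {a : EReal} (ha_bot : a ≠ ⊥) (ha_top : a ≠ ⊤) :
    (EReal.exp (-a)).toReal = Real.exp (-a.toReal) := by
  lift a to ℝ using ⟨ha_top, ha_bot⟩
  rw [← EReal.coe_neg, EReal.exp_coe, EReal.toReal_coe, ENNReal.toReal_ofReal (exp_nonneg _)]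

lemma EReal.coe_ennreal_add_coe_eq_coe_iff {k : ℝ≥0∞} {c : ℝ} :
    (k : EReal) + c = c ↔ k = 0 := by
  rw [← EReal.coe_ennreal_eq_zero]
  refine ⟨fun h ↦ ?_, fun h ↦ by rw [h, zero_add]⟩
  simpa [EReal.add_sub_cancel_right] using congrArg (· - (c : EReal)) h

section Gibbs

variable {X : Type*} [MeasurableSpace X]

noncomputable def partitionFunction (μ : Measure X) (H : X → EReal) : ℝ≥0∞ :=
  ∫⁻ x, EReal.exp (-(H x)) ∂μ

noncomputable def gibbsMeasure (μ : Measure X) (H : X → EReal) : Measure X :=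
  (partitionFunction μ H)⁻¹ • μ.withDensity (fun x ↦ EReal.exp (-(H x)))

variable {μ ρ : Measure X} {H : X → EReal}

lemma isProbabilityMeasure_gibbsMeasure (hZ0 : partitionFunction μ H ≠ 0)
    (hZtop : partitionFunction μ H ≠ ∞) : IsProbabilityMeasure (gibbsMeasure μ H) := by
  constructor
  rw [gibbsMeasure, Measure.smul_apply, withDensity_apply _ MeasurableSet.univ, setLIntegral_univ,
    smul_eq_mul, ← partitionFunction, ENNReal.inv_mul_cancel hZ0 hZtop]

lemma absolutelyContinuous_gibbsMeasure (hH : Measurable H) (hZtop : partitionFunction μ H ≠ ∞)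
    (hρμ : ρ ≪ μ) (hρH : ∀ᵐ x ∂ρ, H x ≠ ⊤) : ρ ≪ gibbsMeasure μ H := by
  refine (hρμ.withDensity_of_ae_ne_zero hH.neg.ereal_exp.aemeasurable ?_).smul_right
    (ENNReal.inv_ne_zero.mpr hZtop)
  filter_upwards [hρH] with x hx
  simpa using hx

lemma llr_gibbsMeasure [IsFiniteMeasure ρ] [SigmaFinite μ] (hH : Measurable H)
    (hH_bot : ∀ x, H x ≠ ⊥) (hZ0 : partitionFunction μ H ≠ 0) (hZtop : partitionFunction μ H ≠ ∞)
    (hρμ : ρ ≪ μ) (hρH : ∀ᵐ x ∂ρ, H x ≠ ⊤) :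
    llr ρ (gibbsMeasure μ H) =ᵐ[ρ]
      fun x ↦ llr ρ μ x + (H x).toReal + log (partitionFunction μ H).toReal := by
  have he : Measurable fun x ↦ EReal.exp (-(H x)) := hH.neg.ereal_exp
  have hρe : ρ ≪ μ.withDensity fun x ↦ EReal.exp (-(H x)) :=
    hρμ.withDensity_of_ae_ne_zero he.aemeasurable (by simpa using hρH)
  have := isFiniteMeasure_withDensity hZtop
  filter_upwards [llr_smul_right hρe _ (ENNReal.inv_ne_zero.mpr hZtop) (ENNReal.inv_ne_top.mpr hZ0),
    llr_withDensity_right he (ae_of_all _ fun x ↦ by simpa using hH_bot x) hρe, hρH]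
    with x hsmul hdens hx_top
  rw [gibbsMeasure, hsmul, hdens, EReal.toReal_exp_neg (hH_bot x) hx_top, log_exp,
    ENNReal.toReal_inv, log_inv]
  ring

lemma klDiv_add_integral_eq_klDiv_gibbsMeasure [IsProbabilityMeasure ρ] [IsProbabilityMeasure μ]
    (hH : Measurable H) (hH_bot : ∀ x, H x ≠ ⊥) (hZ0 : partitionFunction μ H ≠ 0)
    (hZtop : partitionFunction μ H ≠ ∞) (hρμ : ρ ≪ μ) (hρH : ∀ᵐ x ∂ρ, H x ≠ ⊤)
    (hH_int : Integrable (fun x ↦ (H x).toReal) ρ) :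
    (klDiv ρ μ : EReal) + ((∫ x, (H x).toReal ∂ρ : ℝ) : EReal) =
      klDiv ρ (gibbsMeasure μ H) + ((-log (partitionFunction μ H).toReal : ℝ) : EReal) := by
  have := isProbabilityMeasure_gibbsMeasure hZ0 hZtop
  have hργ := absolutelyContinuous_gibbsMeasure hH hZtop hρμ hρH
  have hllr := llr_gibbsMeasure hH hH_bot hZ0 hZtop hρμ hρH
  by_cases hint : Integrable (llr ρ μ) ρ
  · have hint_sum : Integrable (fun x ↦ llr ρ μ x + (H x).toReal) ρ := hint.add hH_int
    have hintγ : Integrable (llr ρ (gibbsMeasure μ H)) ρ :=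
      (hint_sum.add (integrable_const _)).congr hllr.symm
    rw [← EReal.coe_ennreal_toReal (klDiv_ne_top hρμ hint),
      ← EReal.coe_ennreal_toReal (klDiv_ne_top hργ hintγ), toReal_klDiv_of_measure_eq hρμ (by simp),
      toReal_klDiv_of_measure_eq hργ (by simp), integral_congr_ae hllr,
      integral_add hint_sum (integrable_const _), integral_add hint hH_int,
      integral_const, probReal_univ, one_smul, ← EReal.coe_add, ← EReal.coe_add]
    congr 1
    ring
  · have hintγ : ¬ Integrable (llr ρ (gibbsMeasure μ H)) ρ := fun h ↦ hint <|
      ((h.sub hH_int).sub (integrable_const (log (partitionFunction μ H).toReal))).congr <| by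
        filter_upwards [hllr] with x hx
        simp only [Pi.sub_apply, hx]
        ring
    rw [klDiv_of_not_integrable hint, klDiv_of_not_integrable hintγ, EReal.coe_ennreal_top,
      EReal.top_add_coe, EReal.top_add_coe]

end Gibbs

/-- Gibbs variational principle: for `H : X → (-∞, ∞]` with `Z = ∫ exp(-H) dμ ∈ (0, ∞)`,
every probability measure `ρ ≪ μ` with well-defined energy satisfies
`relEntropy(ρ‖μ) + ∫ H dρ ≥ -log Z`, with equality iff `ρ` is the Gibbs measure
`Z⁻¹ exp(-H) dμ`. -/
theorem stmt6 {X : Type*} [MeasurableSpace X]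
    (μ : Measure X) [IsProbabilityMeasure μ]
    (H : X → EReal) (hH : Measurable H) (hbot : ∀ x, H x ≠ ⊥)
    (hZ0 : 0 < ∫⁻ x, EReal.exp (-(H x)) ∂μ)
    (hZtop : ∫⁻ x, EReal.exp (-(H x)) ∂μ ≠ ⊤)
    (ρ : Measure X) [IsProbabilityMeasure ρ] (hac : ρ ≪ μ)
    (htop : ∀ᵐ x ∂ρ, H x ≠ ⊤)
    (hint : Integrable (fun x => (H x).toReal) ρ) :
    ((-(Real.log (∫⁻ x, EReal.exp (-(H x)) ∂μ).toReal) : ℝ) : EReal) ≤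
      relEntropy ρ μ + ((∫ x, (H x).toReal ∂ρ : ℝ) : EReal) ∧
    (relEntropy ρ μ + ((∫ x, (H x).toReal ∂ρ : ℝ) : EReal) =
        ((-(Real.log (∫⁻ x, EReal.exp (-(H x)) ∂μ).toReal) : ℝ) : EReal) ↔
      ρ = (∫⁻ x, EReal.exp (-(H x)) ∂μ)⁻¹ •
        μ.withDensity (fun x => EReal.exp (-(H x)))) := by
  simp only [← partitionFunction.eq_1, ← gibbsMeasure.eq_1] at hZ0 hZtop ⊢
  have := isProbabilityMeasure_gibbsMeasure hZ0.ne' hZtop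
  rw [relEntropy_eq_klDiv,
    klDiv_add_integral_eq_klDiv_gibbsMeasure hH hbot hZ0.ne' hZtop hac htop hint]
  refine ⟨le_add_of_nonneg_left (EReal.coe_ennreal_nonneg _), ?_⟩
  exact EReal.coe_ennreal_add_coe_eq_coe_iff.trans klDiv_eq_zero_iff
end
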